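/- arXiv:1103.4901 — 4 statements merged into one kernel-verified Lean document; each statement's English description precedes it below -/
import Mathlib

section
/- Let G be an infinite, connected, locally finite simplicial graph with vertex set V. Then the combinatorial Laplacian Δ_G : ℝ^V → ℝ^V, defined by Δ_G(f)(v) = f(v) - (1/deg(v)) · Σ_{w ∼ v} f(w), is surjective. -/
open SimpleGraph

noncomputable def lap {V : Type*} (G : SimpleGraph V) [G.LocallyFinite] (f : V → ℝ) (v : V) : ℝ :=
  f v - (1 / (G.degree v : ℝ)) * ∑ w ∈ G.neighborFinset v, f w

/-!
Solving `lap G f = g` amounts to the linear system `⟨a_v, f⟩ = deg v * g v`, one equation per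
vertex, with finitely supported rows `a_v = deg v • e_v - ∑_{w ∼ v} e_w`. Such a system with
linearly independent rows is always solvable: a functional on the span of the rows extends to all
finitely supported vectors. A relation `∑ c_v a_v = 0` says, by symmetry of adjacency, that the
finitely supported function `c` is harmonic everywhere; since `V` is infinite, `c` vanishes
somewhere, and the maximum principle on the connected graph forces `c = 0`.
-/

open Finsupp

theorem LinearIndependent.exists_linearCombination_eq {ι X K : Type*} [Field K]
    {a : ι → X →₀ K} (ha : LinearIndependent K a) (b : ι → K) :
    ∃ f : X → K, ∀ i, linearCombination K f (a i) = b i := by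
  obtain ⟨φ, hφ⟩ := LinearMap.dualMap_surjective_of_injective ha (linearCombination K b)
  refine ⟨(Finsupp.lift K K X).symm φ, fun i => ?_⟩
  have hφ_eq : linearCombination K ((Finsupp.lift K K X).symm φ) = φ := by
    ext x; simp [lift_symm_apply]
  rw [hφ_eq]
  simpa using congr($hφ (single i 1))

namespace SimpleGraph

variable {V : Type*} (G : SimpleGraph V) [G.LocallyFinite]

def IsHarmonicAt (y : V → ℝ) (v : V) : Prop :=
  (G.degree v : ℝ) * y v = ∑ w ∈ G.neighborFinset v, y w

variable {G}

theorem IsHarmonicAt.neg {y : V → ℝ} {v : V} (h : G.IsHarmonicAt y v) :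
    G.IsHarmonicAt (-y) v := by
  simp only [IsHarmonicAt, Pi.neg_apply, mul_neg, Finset.sum_neg_distrib]
  exact congrArg Neg.neg h

theorem Preconnected.le_zero_of_isHarmonicAt [Infinite V] (hG : G.Preconnected) {S : Finset V}
    {y : V → ℝ} (hS : ∀ v ∉ S, y v = 0) (hy : ∀ v ∈ S, G.IsHarmonicAt y v) (v : V) :
    y v ≤ 0 := by
  by_contra! hv
  have hvS : v ∈ S := by_contra fun h => hv.ne' (hS v h)
  obtain ⟨v₀, -, hmax⟩ := S.exists_max_image y ⟨v, hvS⟩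
  have hpos : 0 < y v₀ := hv.trans_le (hmax v hvS)
  have hle : ∀ w, y w ≤ y v₀ := fun w => by
    by_cases h : w ∈ S
    · exact hmax w h
    · exact (hS w h).trans_le hpos.le
  -- at a positive maximum, harmonicity forces every neighbour to attain the maximum
  have hadj : ∀ x w, G.Adj x w → y x = y v₀ → y w = y v₀ := by
    intro x w hxw hx
    have hxS : x ∈ S := by_contra fun h => hpos.ne' (hx ▸ hS x h)
    by_contra hne
    have hlt : ∑ w' ∈ G.neighborFinset x, y w' < ∑ _w' ∈ G.neighborFinset x, y v₀ :=
      Finset.sum_lt_sum (fun w' _ => hle w')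
        ⟨w, (G.mem_neighborFinset x w).mpr hxw, (hle w).lt_of_ne hne⟩
    have := hy x hxS
    simp only [IsHarmonicAt, hx, Finset.sum_const, card_neighborFinset_eq_degree,
      nsmul_eq_mul] at this hlt
    linarith
  have hwalk : ∀ {a c : V}, G.Walk a c → y a = y v₀ → y c = y v₀ := by
    intro a c p
    induction p with
    | nil => exact id
    | cons h _ ih => exact fun ha => ih (hadj _ _ h ha)
  obtain ⟨u, hu⟩ := Infinite.exists_notMem_finset S
  obtain ⟨p⟩ := hG v₀ u
  exact hpos.ne' ((hwalk p rfl).symm.trans (hS u hu))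

theorem Preconnected.eq_zero_of_isHarmonicAt [Infinite V] (hG : G.Preconnected) {S : Finset V}
    {y : V → ℝ} (hS : ∀ v ∉ S, y v = 0) (hy : ∀ v, G.IsHarmonicAt y v) : y = 0 := by
  funext v
  refine le_antisymm (hG.le_zero_of_isHarmonicAt hS (fun v _ => hy v) v) ?_
  simpa using hG.le_zero_of_isHarmonicAt (y := -y) (by simpa using hS) (fun v _ => (hy v).neg) v

variable (G)

noncomputable def laplacianRow (v : V) : V →₀ ℝ :=
  single v (G.degree v : ℝ) - ∑ w ∈ G.neighborFinset v, single w 1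

theorem linearCombination_laplacianRow (f : V → ℝ) (v : V) :
    linearCombination ℝ f (G.laplacianRow v) = G.degree v * f v - ∑ w ∈ G.neighborFinset v, f w := by
  simp [laplacianRow, mul_comm]

theorem sum_smul_laplacianRow_apply (s : Finset V) (g : V → ℝ) (x : V) :
    (∑ v ∈ s, g v • G.laplacianRow v) x =
      G.degree x * (s : Set V).indicator g x
        - ∑ w ∈ G.neighborFinset x, (s : Set V).indicator g w := by
  classical
  simp only [laplacianRow, Finset.sum_apply', coe_smul, coe_sub, coe_finsetSum, Pi.smul_apply,
    Pi.sub_apply, single_apply, Finset.sum_apply, Finset.sum_ite_eq', mem_neighborFinset,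
    smul_eq_mul, Set.indicator_apply, SetLike.mem_coe, mul_ite, mul_zero, Finset.sum_ite_mem]
  rw [Finset.sum_congr rfl fun k _ => mul_sub (g k) _ _, Finset.sum_sub_distrib]
  congr 1
  · simp [mul_ite, mul_comm]
  · rw [Finset.sum_congr rfl fun k _ => mul_boole _ _, ← Finset.sum_filter]
    congr 1
    ext k
    simp [adj_comm, and_comm]

variable {G}

theorem Preconnected.linearIndependent_laplacianRow [Infinite V] (hG : G.Preconnected) :
    LinearIndependent ℝ G.laplacianRow := by
  rw [linearIndependent_iff']
  intro s g hg v hv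
  have harmonic : ∀ x, G.IsHarmonicAt ((s : Set V).indicator g) x := fun x =>
    sub_eq_zero.mp ((G.sum_smul_laplacianRow_apply s g x).symm.trans (by rw [hg]; rfl))
  have := congrFun (hG.eq_zero_of_isHarmonicAt (S := s)
    (fun _ hw => Set.indicator_of_notMem (by simpa using hw) _) harmonic) v
  simpa [hv] using this

theorem Preconnected.exists_degree_mul_sub_sum_eq [Infinite V] (hG : G.Preconnected)
    (b : V → ℝ) : ∃ f : V → ℝ, ∀ v, G.degree v * f v - ∑ w ∈ G.neighborFinset v, f w = b v := by
  obtain ⟨f, hf⟩ := hG.linearIndependent_laplacianRow.exists_linearCombination_eq b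
  exact ⟨f, fun v => (G.linearCombination_laplacianRow f v).symm.trans (hf v)⟩

end SimpleGraph

theorem stmt0 {V : Type*} [Infinite V] (G : SimpleGraph V) [G.LocallyFinite]
    (hconn : G.Connected) : Function.Surjective (lap G) := by
  intro g
  obtain ⟨f, hf⟩ := hconn.preconnected.exists_degree_mul_sub_sum_eq fun v => G.degree v * g v
  refine ⟨f, funext fun v => ?_⟩
  have hdeg : (G.degree v : ℝ) ≠ 0 := by
    exact_mod_cast (hconn.preconnected.degree_pos_of_nontrivial v).ne'
  have := hf v
  unfold lap
  field_simp
  linarith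
end

section
/- Let G be a connected locally finite simplicial graph with vertex set V. Then the image Δ_G(ℝ^V) of the combinatorial Laplacian is closed in ℝ^V with respect to the prodiscrete topology (the product topology where each factor ℝ carries the discrete topology). -/
open SimpleGraph

/-!
Each coordinate of the Laplacian depends on finitely many coordinates, and a connected locally
finite graph is countable. For such an operator `L` and `g` in the prodiscrete closure of its
range, enumerate the vertices and let `S m` be the affine space of `f` with `L f = g` on the first
`m` vertices; all are nonempty. For a finite set `C`, the restrictions of the `S m` to `C` form a
decreasing chain of nonempty affine subspaces of the finite-dimensional space `K^C`, so the chain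
stabilizes (Mittag-Leffler). Therefore restrictions of late enough partial solutions extend to
partial solutions of any size, which yields a compatible sequence that glues to a solution of
`L f = g`.
-/

open Set Filter

theorem isClosed_pi_bot_of_forall_finset {ι X : Type*} {s : Set (ι → X)}
    (h : ∀ g, (∀ F : Finset ι, ∃ f ∈ s, ∀ i ∈ F, f i = g i) → g ∈ s) :
    @IsClosed _ (@Pi.topologicalSpace ι (fun _ => X) (fun _ => ⊥)) s := by
  let _ : TopologicalSpace X := ⊥
  have : DiscreteTopology X := ⟨rfl⟩
  refine isClosed_of_closure_subset fun g hg => h g fun F => ?_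
  obtain ⟨f, hfg, hfs⟩ := mem_closure_iff.1 hg ((F : Set ι).pi fun i => {g i})
    (isOpen_set_pi F.finite_toSet fun _ _ => isOpen_discrete _) fun _ _ => rfl
  exact ⟨f, hfs, fun i hi => hfg i hi⟩

theorem AffineSubspace.exists_forall_ge_eq_of_antitone {K E : Type*} [Field K] [AddCommGroup E]
    [Module K E] [FiniteDimensional K E] {A : ℕ → AffineSubspace K E} (hA : Antitone A)
    (hne : ∀ n, (A n : Set E).Nonempty) : ∃ N, ∀ n ≥ N, A n = A N := by
  obtain ⟨N, hN⟩ := WellFoundedLT.antitone_chain_condition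
    (f := fun n => (A n).direction) fun _ _ h => direction_le (hA h)
  exact ⟨N, fun n hn => eq_of_direction_eq_of_nonempty_of_le (hN n hn).symm (hne n) (hA hn)⟩

theorem exists_seq_of_forall_exists_succ {α : Type*} {P : ℕ → α → Prop} {r : ℕ → α → α → Prop}
    (h0 : ∃ a, P 0 a) (h : ∀ n a, P n a → ∃ b, P (n + 1) b ∧ r n a b) :
    ∃ u : ℕ → α, ∀ n, P n (u n) ∧ r n (u n) (u (n + 1)) := by
  choose next hnext using h
  let u : ∀ n, {a // P n a} :=
    fun n => Nat.rec ⟨h0.choose, h0.choose_spec⟩ (fun n a => ⟨next n a a.2, (hnext n a a.2).1⟩) n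
  exact ⟨fun n => (u n).1, fun n => ⟨(u n).2, (hnext n _ (u n).2).2⟩⟩

theorem exists_eqOn_of_eqOn_succ {α β : Type*} {C : ℕ → Set α} (hC : Monotone C)
    {u : ℕ → α → β} (hu : ∀ n, EqOn (u (n + 1)) (u n) (C n)) :
    ∃ f : α → β, ∀ n, EqOn f (u n) (C n) := by
  classical
  have hle : ∀ n m, n ≤ m → EqOn (u m) (u n) (C n) := by
    intro n m hnm
    induction m, hnm using Nat.le_induction with
    | base => exact eqOn_refl _ _
    | succ m hnm ih => exact ((hu m).mono (hC hnm)).trans ih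
  refine ⟨fun a => if h : ∃ n, a ∈ C n then u h.choose a else u 0 a, fun n a ha => ?_⟩
  have h : ∃ n, a ∈ C n := ⟨n, ha⟩
  simp only [dif_pos h]
  rw [← hle _ _ (le_max_left h.choose n) h.choose_spec,
    hle _ _ (le_max_right h.choose n) ha]

section LocalOperator

variable {K V W : Type*} [Field K] (L : (V → K) →ₗ[K] (W → K)) (g : W → K)

def partialSolutions (s : Finset W) : AffineSubspace K (V → K) where
  carrier := {f | ∀ w ∈ s, L f w = g w}
  smul_vsub_vadd_mem' c f₁ f₂ f₃ h₁ h₂ h₃ w hw := by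
    simp [h₁ w hw, h₂ w hw, h₃ w hw]

theorem partialSolutions_anti : Antitone (partialSolutions L g) :=
  fun _ _ hst _ hf w hw => hf w (hst hw)

variable {g}

theorem eventually_partialSolutions_extend
    (hg : ∀ s, (partialSolutions L g s : Set (V → K)).Nonempty) {F : ℕ → Finset W}
    (hF : Monotone F) (C : Finset V) :
    ∀ᶠ M in atTop, ∀ m, ∀ f ∈ partialSolutions L g (F M),
      ∃ h ∈ partialSolutions L g (F m), EqOn h f C := by
  let res : (V → K) →ᵃ[K] (C → K) := (LinearMap.funLeft K K ((↑) : C → V)).toAffineMap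
  obtain ⟨N, hN⟩ := AffineSubspace.exists_forall_ge_eq_of_antitone
    (A := fun m => (partialSolutions L g (F m)).map res)
    (fun _ _ h => AffineSubspace.map_mono _ (partialSolutions_anti L g (hF h)))
    fun m => (hg (F m)).image res
  filter_upwards [eventually_ge_atTop N] with M hM m f hf
  rcases le_total m M with hmM | hMm
  · exact ⟨f, partialSolutions_anti L g (hF hmM) hf, eqOn_refl _ _⟩
  have hres : res f ∈ (partialSolutions L g (F m)).map res := by
    rw [hN m (hM.trans hMm), ← hN M hM]
    exact AffineSubspace.mem_map_of_mem res hf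
  obtain ⟨h, hh, hhf⟩ := hres
  exact ⟨h, hh, fun v hv => congrFun hhf ⟨v, hv⟩⟩

theorem mem_range_of_forall_finset [Countable W] (N : W → Finset V)
    (hL : ∀ w ⦃f f' : V → K⦄, EqOn f f' (N w) → L f w = L f' w)
    (hg : ∀ s : Finset W, ∃ f, ∀ w ∈ s, L f w = g w) : g ∈ range L := by
  classical
  rcases isEmpty_or_nonempty W with _ | _
  · exact ⟨0, funext isEmptyElim⟩
  obtain ⟨e, he⟩ := exists_surjective_nat W
  set F : ℕ → Finset W := fun n => (Finset.range n).image e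
  have hF : Monotone F := fun _ _ h => Finset.image_subset_image (Finset.range_mono h)
  set C : ℕ → Finset V := fun n => (F n).biUnion N
  have hC : Monotone fun n => (C n : Set V) :=
    fun _ _ h => Finset.coe_subset.2 (Finset.biUnion_subset_biUnion_of_subset_left N (hF h))
  have hext : ∀ n, ∃ M, n ≤ M ∧ ∀ m, ∀ f ∈ partialSolutions L g (F M),
      ∃ h ∈ partialSolutions L g (F m), EqOn h f (C n) := fun n =>
    ((eventually_ge_atTop n).and (eventually_partialSolutions_extend L hg hF (C n))).exists
  choose M hnM hM using hext
  obtain ⟨u, hu⟩ := exists_seq_of_forall_exists_succ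
    (P := fun n f => f ∈ partialSolutions L g (F (M n))) (r := fun n f f' => EqOn f' f (C n))
    (hg _) fun n f hf => hM n (M (n + 1)) f hf
  obtain ⟨f, hf⟩ := exists_eqOn_of_eqOn_succ hC fun n => (hu n).2
  refine ⟨f, funext fun w => ?_⟩
  obtain ⟨i, rfl⟩ := he w
  have hi : e i ∈ F (i + 1) := Finset.mem_image_of_mem e (Finset.self_mem_range_succ i)
  calc L f (e i) = L (u (i + 1)) (e i) :=
        hL _ ((hf (i + 1)).mono (Finset.coe_subset.2 (Finset.subset_biUnion_of_mem N hi)))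
    _ = g (e i) := (hu (i + 1)).1 _ (hF (hnM _) hi)

theorem isClosed_range_of_forall_eqOn [Countable W] (N : W → Finset V)
    (hL : ∀ w ⦃f f' : V → K⦄, EqOn f f' (N w) → L f w = L f' w) :
    @IsClosed (W → K) (@Pi.topologicalSpace W (fun _ => K) (fun _ => ⊥)) (range L) :=
  isClosed_pi_bot_of_forall_finset fun _ hg => mem_range_of_forall_finset L N hL fun s =>
    let ⟨_, ⟨f, rfl⟩, hf⟩ := hg s; ⟨f, hf⟩

end LocalOperator

namespace SimpleGraph

variable {V : Type*} (G : SimpleGraph V) [G.LocallyFinite]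

theorem finite_setOf_exists_walk_length (r : V) (n : ℕ) :
    {v | ∃ p : G.Walk v r, p.length = n}.Finite := by
  induction n with
  | zero =>
    refine (finite_singleton r).subset ?_
    rintro v ⟨p, hp⟩
    exact Walk.eq_of_length_eq_zero hp
  | succ n ih =>
    refine (ih.biUnion fun u _ => (G.neighborSet u).toFinite).subset ?_
    rintro v ⟨_ | ⟨h, p⟩, hp⟩
    · simp at hp
    · exact mem_biUnion (x := _) ⟨p, by simpa using hp⟩ h.symm

theorem Preconnected.countable (hG : G.Preconnected) : Countable V := by
  rcases isEmpty_or_nonempty V with _ | ⟨⟨r⟩⟩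
  · infer_instance
  have hcover : (⋃ n, {v | ∃ p : G.Walk v r, p.length = n}) = univ :=
    eq_univ_of_forall fun v => mem_iUnion.2 ⟨_, (hG v r).some, rfl⟩
  exact countable_univ_iff.1 <|
    hcover ▸ countable_iUnion fun n => (G.finite_setOf_exists_walk_length r n).countable

theorem lap_congr {f f' : V → ℝ} {v : V} (hv : f v = f' v) (hN : EqOn f f' (G.neighborSet v)) :
    lap G f v = lap G f' v := by
  rw [lap, lap, hv, Finset.sum_congr rfl fun w hw => hN ((G.mem_neighborFinset v w).1 hw)]

noncomputable def lapLinearMap : (V → ℝ) →ₗ[ℝ] (V → ℝ) where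
  toFun := lap G
  map_add' f f' := funext fun v => by
    simp only [lap, Pi.add_apply, Finset.sum_add_distrib]
    ring
  map_smul' c f := funext fun v => by
    simp only [lap, Pi.smul_apply, smul_eq_mul, RingHom.id_apply, ← Finset.mul_sum]
    ring

end SimpleGraph

theorem stmt6 {V : Type*} (G : SimpleGraph V) [G.LocallyFinite] (hconn : G.Connected) :
    @IsClosed (V → ℝ) (@Pi.topologicalSpace V (fun _ => ℝ) (fun _ => ⊥))
      (Set.range (lap G)) := by
  classical
  have := hconn.preconnected.countable
  refine isClosed_range_of_forall_eqOn G.lapLinearMap (fun v => insert v (G.neighborFinset v))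
    fun v _ _ h => G.lap_congr (h (Finset.mem_insert_self v _)) fun w hw => h ?_
  simpa using Or.inr hw
end

section
/- Let G be an infinite, connected, locally finite simplicial graph with vertex set V, and let λ : V → [0, ∞) be any nonnegative function. Then the operator L = Δ_G + λ·Id, defined by L(f)(v) = Δ_G(f)(v) + λ(v) f(v), is surjective as a linear map ℝ^V → ℝ^V. -/
open SimpleGraph
open scoped Classical

section Aux

variable {V : Type*} (G : SimpleGraph V) [G.LocallyFinite] (lam : V → ℝ)

/-- The "predual" vector `E v = (1+λ v) δ_v - (1/deg v) ∑_{w ~ v} δ_w`. -/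
noncomputable def lapE (v : V) : V →₀ ℝ :=
  (1 + lam v) • Finsupp.single v 1
    - ((G.degree v : ℝ))⁻¹ • ∑ w ∈ G.neighborFinset v, Finsupp.single w 1

/-- The predual operator on finitely supported functions. -/
noncomputable def lapT : (V →₀ ℝ) →ₗ[ℝ] (V →₀ ℝ) :=
  Finsupp.lsum ℝ (fun v => LinearMap.toSpanSingleton ℝ _ (lapE G lam v))

lemma lapT_single (v : V) : lapT G lam (Finsupp.single v 1) = lapE G lam v := by
  simp [lapT]

lemma lapE_apply (v w : V) :
    lapE G lam v w = (1 + lam v) * (if v = w then 1 else 0)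
      - ((G.degree v : ℝ))⁻¹ * (if v ∈ G.neighborFinset w then 1 else 0) := by
  classical
  have hsum : (∑ u ∈ G.neighborFinset v, Finsupp.single u (1:ℝ)) w
      = (if v ∈ G.neighborFinset w then 1 else 0) := by
    rw [Finset.sum_apply']
    have hiff : w ∈ G.neighborFinset v ↔ v ∈ G.neighborFinset w := by
      simp [SimpleGraph.mem_neighborFinset, adj_comm]
    by_cases hw : w ∈ G.neighborFinset v
    · rw [Finset.sum_eq_single w]
      · simp [hw, hiff.mp hw]
      · intro b _ hb
        simp [Finsupp.single_apply, hb]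
      · intro h; exact absurd hw h
    · rw [if_neg (fun h => hw (hiff.mpr h))]
      apply Finset.sum_eq_zero
      intro b hb
      have hbw : b ≠ w := fun h => hw (h ▸ hb)
      simp [Finsupp.single_apply, hbw]
  simp only [lapE, Finsupp.sub_apply, Finsupp.smul_apply, hsum, Finsupp.single_apply,
    smul_eq_mul, SimpleGraph.mem_neighborFinset]

lemma lapT_apply (g : V →₀ ℝ) (w : V) :
    lapT G lam g w = (1 + lam w) * g w
      - ∑ v ∈ G.neighborFinset w, g v / (G.degree v : ℝ) := by
  classical
  have h1 : lapT G lam g w = ∑ v ∈ g.support, g v * lapE G lam v w := by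
    rw [lapT, Finsupp.lsum_apply, Finsupp.sum_apply, Finsupp.sum]
    apply Finset.sum_congr rfl
    intro v _
    simp [LinearMap.toSpanSingleton_apply]
  rw [h1]
  have h2 : ∀ v ∈ g.support, g v * lapE G lam v w
      = (if v = w then (1 + lam w) * g w else 0)
        - (if v ∈ G.neighborFinset w then g v / (G.degree v : ℝ) else 0) := by
    intro v _
    rw [lapE_apply]
    by_cases hvw : v = w <;> by_cases hn : v ∈ G.neighborFinset w <;>
      simp [hvw, hn] <;> ring
  rw [Finset.sum_congr rfl h2, Finset.sum_sub_distrib]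
  congr 1
  · by_cases hw : w ∈ g.support
    · rw [Finset.sum_eq_single w] <;> simp_all
    · rw [Finset.sum_eq_zero]
      · have : g w = 0 := Finsupp.notMem_support_iff.mp hw
        simp [this]
      · intro v hv
        have : v ≠ w := fun h => hw (h ▸ hv)
        simp [this]
  · rw [Finset.sum_ite_mem]
    apply Finset.sum_subset (Finset.inter_subset_right)
    intro v _ hv
    have : g v = 0 := by
      by_contra h
      exact hv (Finset.mem_inter.mpr ⟨Finsupp.mem_support_iff.mpr h, by assumption⟩)
    simp [this]

end Aux

lemma lapT_pos_false {V : Type*} [Infinite V] (G : SimpleGraph V) [G.LocallyFinite]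
    (hconn : G.Connected) (lam : V → ℝ) (hlam : ∀ v, 0 ≤ lam v)
    (g : V →₀ ℝ) (hg : lapT G lam g = 0) (v0 : V) (hpos : 0 < g v0) : False := by
  classical
  have hdeg : ∀ v : V, 0 < G.degree v := by
    intro v
    rw [G.degree_pos_iff_exists_adj]
    obtain ⟨w, hw⟩ := exists_ne v
    obtain ⟨p⟩ := hconn.preconnected v w
    cases p with
    | nil => exact (hw rfl).elim
    | cons hadj q => exact ⟨_, hadj⟩
  have hdegR : ∀ v : V, (0:ℝ) < (G.degree v : ℝ) := fun v => by
    exact_mod_cast hdeg v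
  set u : V → ℝ := fun v => g v / (G.degree v : ℝ) with hu
  have hv0mem : v0 ∈ g.support := Finsupp.mem_support_iff.mpr (ne_of_gt hpos)
  have hsupp : g.support.Nonempty := ⟨v0, hv0mem⟩
  set M : ℝ := g.support.sup' hsupp u with hMdef
  have hMpos : 0 < M := by
    have h1 : 0 < u v0 := div_pos hpos (hdegR v0)
    exact lt_of_lt_of_le h1 (Finset.le_sup' u hv0mem)
  have hle : ∀ v, u v ≤ M := by
    intro v
    by_cases hv : v ∈ g.support
    · exact Finset.le_sup' u hv
    · have h0 : g v = 0 := Finsupp.notMem_support_iff.mp hv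
      have : u v = 0 := by simp [hu, h0]
      rw [this]; exact le_of_lt hMpos
  have heq : ∀ w, (1 + lam w) * g w = ∑ v ∈ G.neighborFinset w, u v := by
    intro w
    have h0 : lapT G lam g w = 0 := by rw [hg]; rfl
    rw [lapT_apply] at h0
    have := sub_eq_zero.mp h0
    exact this
  have step : ∀ w, u w = M → ∀ v ∈ G.neighborFinset w, u v = M := by
    intro w hw
    have hgw : g w = u w * (G.degree w : ℝ) :=
      (div_mul_cancel₀ _ (ne_of_gt (hdegR w))).symm
    have hEq : (1 + lam w) * (M * (G.degree w : ℝ))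
        = ∑ v ∈ G.neighborFinset w, u v := by
      rw [← hw, ← hgw]; exact heq w
    intro v hv
    by_contra hne
    have hlt : u v < M := lt_of_le_of_ne (hle v) hne
    have hsumlt : ∑ x ∈ G.neighborFinset w, u x
        < ∑ _x ∈ G.neighborFinset w, M := by
      apply Finset.sum_lt_sum (fun x _ => hle x) ⟨v, hv, hlt⟩
    have hcard : ∑ _x ∈ G.neighborFinset w, M = (G.degree w : ℝ) * M := by
      rw [Finset.sum_const, SimpleGraph.card_neighborFinset_eq_degree]
      simp [nsmul_eq_mul]
    rw [hcard] at hsumlt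
    have hlb : (G.degree w : ℝ) * M ≤ (1 + lam w) * (M * (G.degree w : ℝ)) := by
      have h0 : 0 ≤ lam w * (M * (G.degree w : ℝ)) :=
        mul_nonneg (hlam w) (mul_nonneg hMpos.le (hdegR w).le)
      nlinarith [h0]
    rw [hEq] at hlb
    linarith
  obtain ⟨vm, hvmmem, hvmM⟩ := Finset.exists_mem_eq_sup' hsupp u
  have humM : u vm = M := hvmM.symm
  have walkstep : ∀ (a b : V) (_p : G.Walk a b), u a = M → u b = M := by
    intro a b p
    induction p with
    | nil => exact id
    | cons h q ih =>
        intro ha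
        exact ih (step _ ha _ (by rwa [SimpleGraph.mem_neighborFinset]))
  have hall : ∀ v, u v = M := by
    intro v
    obtain ⟨p⟩ := hconn.preconnected vm v
    exact walkstep vm v p humM
  obtain ⟨z, hz⟩ := Infinite.exists_notMem_finset g.support
  have h0 : g z = 0 := Finsupp.notMem_support_iff.mp hz
  have : u z = 0 := by simp [hu, h0]
  rw [hall z] at this
  linarith

lemma lapT_ker_bot {V : Type*} [Infinite V] (G : SimpleGraph V) [G.LocallyFinite]
    (hconn : G.Connected) (lam : V → ℝ) (hlam : ∀ v, 0 ≤ lam v) :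
    LinearMap.ker (lapT G lam) = ⊥ := by
  rw [LinearMap.ker_eq_bot']
  intro g hg
  by_contra hne
  obtain ⟨v0, hv0⟩ : ∃ v, g v ≠ 0 := by
    by_contra hc
    push_neg at hc
    exact hne (Finsupp.ext hc)
  rcases lt_or_gt_of_ne hv0 with hlt | hgt
  · have hg' : lapT G lam (-g) = 0 := by rw [map_neg, hg, neg_zero]
    exact lapT_pos_false G hconn lam hlam (-g) hg' v0 (by simpa using hlt)
  · exact lapT_pos_false G hconn lam hlam g hg v0 hgt

theorem stmt12 {V : Type*} [Infinite V] (G : SimpleGraph V) [G.LocallyFinite]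
    (hconn : G.Connected) (lam : V → ℝ) (hlam : ∀ v, 0 ≤ lam v) :
    Function.Surjective (fun (f : V → ℝ) (v : V) => lap G f v + lam v * f v) := by
  intro h
  obtain ⟨Minv, hMinv⟩ := LinearMap.exists_leftInverse_of_injective (lapT G lam)
    (lapT_ker_bot G hconn lam hlam)
  set φ : (V →₀ ℝ) →ₗ[ℝ] ℝ := (Finsupp.linearCombination ℝ h).comp Minv with hφ
  refine ⟨fun v => φ (Finsupp.single v 1), ?_⟩
  funext v
  have hkey : lap G (fun w => φ (Finsupp.single w 1)) v
      + lam v * φ (Finsupp.single v 1) = φ (lapE G lam v) := by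
    rw [lapE, map_sub, map_smul, map_smul, map_sum]
    simp only [lap, smul_eq_mul]
    ring
  have hφE : φ (lapE G lam v) = h v := by
    rw [← lapT_single G lam v, hφ]
    have : Minv (lapT G lam (Finsupp.single v 1)) = Finsupp.single v 1 := by
      have := congrArg (fun f => f (Finsupp.single v (1:ℝ))) hMinv
      simpa using this
    simp [this]
  simpa [hkey] using hφE
end

section
/- Let G be an infinite, connected, locally finite simplicial graph with vertex set V, fix v₀ and let B_n be the closed ball of radius n, and let F_n be the space of functions supported in B_n. Then the linear map u_n : F_n → F_n defined by u_n(f)(v) = Δ_G(f)(v) for v ∈ B_n and u_n(f)(v) = 0 otherwise, is bijective. -/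
open SimpleGraph

noncomputable def unMap {V : Type*} (G : SimpleGraph V) [G.LocallyFinite] (v₀ : V) (n : ℕ)
    (f : {f : V → ℝ // ∀ v, f v ≠ 0 → G.dist v₀ v ≤ n}) :
    {f : V → ℝ // ∀ v, f v ≠ 0 → G.dist v₀ v ≤ n} :=
  ⟨fun v => if G.dist v₀ v ≤ n then lap G f.1 v else 0, by
    intro v hv
    by_contra h
    simp [h] at hv⟩

/-!
The ball `B_n` is finite because `G` is locally finite, so `F_n` is finite-dimensional and it
suffices that `u_n` is injective. If `u_n f = 0`, then `f` is harmonic on `B_n` and vanishes off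
it. At a vertex where `f` attains a positive maximum, harmonicity forces every neighbour to attain
the same maximum; by connectedness this spreads to a vertex outside the finite ball (which exists
since `G` is infinite), where `f = 0`. Applying this to `f` and `-f` gives `f = 0`.
-/

namespace SimpleGraph

variable {V : Type*} {G : SimpleGraph V} [G.LocallyFinite]

theorem finite_setOf_exists_walk_length_le (u : V) (n : ℕ) :
    {v | ∃ p : G.Walk u v, p.length ≤ n}.Finite := by
  induction n generalizing u with
  | zero =>
    refine (Set.finite_singleton u).subset ?_
    rintro v ⟨p, hp⟩
    exact (Walk.eq_of_length_eq_zero (Nat.le_zero.mp hp)).symm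
  | succ n ih =>
    refine ((G.neighborSet u).toFinite.biUnion fun w _ => ih w).insert u |>.subset ?_
    rintro v ⟨_ | ⟨hadj, q⟩, hp⟩
    · exact Set.mem_insert _ _
    · simp only [Walk.length_cons, Nat.add_le_add_iff_right] at hp
      exact Set.mem_insert_of_mem _ (Set.mem_biUnion hadj ⟨q, hp⟩)

theorem Preconnected.finite_setOf_dist_le (hG : G.Preconnected) (u : V) (n : ℕ) :
    {v | G.dist u v ≤ n}.Finite :=
  (finite_setOf_exists_walk_length_le u n).subset fun v hv =>
    let ⟨p, hp⟩ := (hG u v).exists_walk_length_eq_dist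
    ⟨p, hp ▸ hv⟩

end SimpleGraph

section Laplacian

variable {V : Type*} (G : SimpleGraph V) [G.LocallyFinite]

theorem lap_add (f g : V → ℝ) (v : V) : lap G (f + g) v = lap G f v + lap G g v := by
  simp only [lap, Pi.add_apply, Finset.sum_add_distrib]
  ring

theorem lap_smul (c : ℝ) (f : V → ℝ) (v : V) : lap G (c • f) v = c * lap G f v := by
  simp only [lap, Pi.smul_apply, smul_eq_mul, ← Finset.mul_sum]
  ring

theorem lap_neg (f : V → ℝ) (v : V) : lap G (-f) v = -lap G f v := by
  simpa using lap_smul G (-1) f v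

theorem lap_eq_inv_degree_mul_sum_sub {f : V → ℝ} {u : V} (hu : 0 < G.degree u) :
    lap G f u = (G.degree u : ℝ)⁻¹ * ∑ w ∈ G.neighborFinset u, (f u - f w) := by
  have hu' : (G.degree u : ℝ) ≠ 0 := by positivity
  rw [lap, Finset.sum_sub_distrib, Finset.sum_const, card_neighborFinset_eq_degree, nsmul_eq_mul,
    mul_sub, inv_mul_cancel_left₀ hu', one_div]

theorem apply_eq_of_adj_of_lap_eq_zero {f : V → ℝ} {u w : V} (hlap : lap G f u = 0)
    (hmax : ∀ x, G.Adj u x → f x ≤ f u) (hadj : G.Adj u w) : f w = f u := by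
  have hu : 0 < G.degree u := G.degree_pos_iff_exists_adj u |>.mpr ⟨w, hadj⟩
  rw [lap_eq_inv_degree_mul_sum_sub G hu, mul_eq_zero, inv_eq_zero, Nat.cast_eq_zero] at hlap
  have hsum := hlap.resolve_left hu.ne'
  have hnonneg : ∀ x ∈ G.neighborFinset u, 0 ≤ f u - f x := fun x hx =>
    sub_nonneg.mpr (hmax x ((G.mem_neighborFinset u x).mp hx))
  have := (Finset.sum_eq_zero_iff_of_nonneg hnonneg).mp hsum w ((G.mem_neighborFinset u w).mpr hadj)
  linarith

variable {G}

theorem nonpos_of_lap_eq_zero (hG : G.Preconnected) {s : Set V} (hs : s.Finite)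
    (hsc : sᶜ.Nonempty) {f : V → ℝ} (hf : ∀ v ∉ s, f v = 0) (hlap : ∀ v ∈ s, lap G f v = 0)
    (v : V) : f v ≤ 0 := by
  by_contra! hv
  have hvs : v ∈ s := by_contra fun h => hv.ne' (hf v h)
  obtain ⟨m, hms, hm⟩ := hs.toFinset.exists_max_image f ⟨v, hs.mem_toFinset.mpr hvs⟩
  have hpos : 0 < f m := hv.trans_le (hm v (hs.mem_toFinset.mpr hvs))
  have hmax : ∀ x, f x ≤ f m := fun x => by
    by_cases hx : x ∈ s
    · exact hm x (hs.mem_toFinset.mpr hx)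
    · exact (hf x hx).le.trans hpos.le
  obtain ⟨w, hw⟩ := hsc
  obtain ⟨p⟩ := hG m w
  obtain ⟨d, -, hd₁, hd₂⟩ := p.exists_boundary_dart {x | f x = f m} rfl
    (by simp [hf w hw, hpos.ne])
  have hd₁s : d.fst ∈ s := by_contra fun h => hpos.ne' (hd₁ ▸ hf _ h)
  exact hd₂ <| (apply_eq_of_adj_of_lap_eq_zero G (hlap _ hd₁s) (fun x _ => hd₁ ▸ hmax x)
    d.adj).trans hd₁

theorem eq_zero_of_lap_eq_zero (hG : G.Preconnected) {s : Set V} (hs : s.Finite)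
    (hsc : sᶜ.Nonempty) {f : V → ℝ} (hf : ∀ v ∉ s, f v = 0) (hlap : ∀ v ∈ s, lap G f v = 0) :
    f = 0 := by
  have hlap_neg : ∀ v ∈ s, lap G (-f) v = 0 := fun v hv => by rw [lap_neg, hlap v hv, neg_zero]
  funext v
  exact le_antisymm (nonpos_of_lap_eq_zero hG hs hsc hf hlap v)
    (neg_nonpos.mp (nonpos_of_lap_eq_zero hG hs hsc (fun v hv => by simp [hf v hv]) hlap_neg v))

end Laplacian

/-- Membership is definitionally the subtype condition of `unMap`, so that `unMap` can serve as the
underlying function of a linear map between such submodules. -/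
def supportedIn {V : Type*} (R : Type*) [Semiring R] (s : Set V) : Submodule R (V → R) where
  carrier := {f | ∀ v, f v ≠ 0 → v ∈ s}
  zero_mem' v h := absurd rfl h
  add_mem' {f g} hf hg v h := by
    by_contra hv
    simp [not_imp_comm.mp (hf v) hv, not_imp_comm.mp (hg v) hv] at h
  smul_mem' c f hf v h := by
    by_contra hv
    simp [not_imp_comm.mp (hf v) hv] at h

theorem apply_eq_zero_of_mem_supportedIn {V R : Type*} [Semiring R] {s : Set V} {f : V → R}
    (hf : f ∈ supportedIn R s) {v : V} (hv : v ∉ s) : f v = 0 :=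
  not_imp_comm.mp (hf v) hv

theorem Set.Finite.finiteDimensional_supportedIn {V K : Type*} [DivisionRing K] {s : Set V}
    (hs : s.Finite) : FiniteDimensional K (supportedIn K s) := by
  have : Finite s := hs
  refine Module.Finite.of_injective
    ((LinearMap.funLeft K K ((↑) : s → V)).comp (supportedIn K s).subtype) fun f g hfg => ?_
  ext v
  by_cases hv : v ∈ s
  · exact congrFun hfg ⟨v, hv⟩
  · rw [apply_eq_zero_of_mem_supportedIn f.2 hv, apply_eq_zero_of_mem_supportedIn g.2 hv]

theorem unMap_apply_of_dist_le {V : Type*} {G : SimpleGraph V} [G.LocallyFinite] {v₀ : V} {n : ℕ}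
    (f : {f : V → ℝ // ∀ v, f v ≠ 0 → G.dist v₀ v ≤ n}) {v : V} (hv : G.dist v₀ v ≤ n) :
    (unMap G v₀ n f).1 v = lap G f.1 v :=
  if_pos hv

noncomputable def unMapₗ {V : Type*} (G : SimpleGraph V) [G.LocallyFinite] (v₀ : V) (n : ℕ) :
    supportedIn ℝ {v | G.dist v₀ v ≤ n} →ₗ[ℝ] supportedIn ℝ {v | G.dist v₀ v ≤ n} where
  toFun := unMap G v₀ n
  map_add' f g := by
    ext v
    change (if G.dist v₀ v ≤ n then lap G (f.1 + g.1) v else 0) =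
      (if G.dist v₀ v ≤ n then lap G f.1 v else 0) + (if G.dist v₀ v ≤ n then lap G g.1 v else 0)
    split_ifs <;> simp [lap_add]
  map_smul' c f := by
    ext v
    change (if G.dist v₀ v ≤ n then lap G (c • f.1) v else 0) =
      c * (if G.dist v₀ v ≤ n then lap G f.1 v else 0)
    split_ifs <;> simp [lap_smul]

theorem stmt17 {V : Type*} [Infinite V] (G : SimpleGraph V) [G.LocallyFinite]
    (hconn : G.Connected) (v₀ : V) (n : ℕ) :
    Function.Bijective (unMap G v₀ n) := by
  have hball := hconn.preconnected.finite_setOf_dist_le v₀ n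
  have := hball.finiteDimensional_supportedIn (K := ℝ)
  have hinj : Function.Injective (unMapₗ G v₀ n) := by
    refine LinearMap.ker_eq_bot.mp <| LinearMap.ker_eq_bot'.mpr fun f hf => Subtype.ext ?_
    refine eq_zero_of_lap_eq_zero hconn.preconnected hball hball.infinite_compl.nonempty
      (fun v => apply_eq_zero_of_mem_supportedIn f.2) fun v hv => ?_
    exact (unMap_apply_of_dist_le f hv).symm.trans (congrFun (congrArg Subtype.val hf) v)
  exact ⟨hinj, LinearMap.injective_iff_surjective.mp hinj⟩
end
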